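/- Let x_1,…,x_n ∈ X and let G be a map from the closed unit ball {f ∈ H : ‖f‖ ≤ 1} to C(X) such that Gf = Gf' whenever ⟨f, Φ(x_i)⟩ = ⟨f', Φ(x_i)⟩ for all i = 1,…,n. Assume additionally the upper-confidence-bound property: (Gf)(x) ≥ ⟨f, Φ(x)⟩ for every f with ‖f‖ ≤ 1 and every x ∈ X. Then sup_{‖f‖ ≤ 1} ∫_X [ (Gf)(x) − ⟨f, Φ(x)⟩ ] dρ(x) ≥ Σ_{i=n+1}^∞ λ_i. -/

import Mathlib

/-!
Let `V` be the span of the `Φ (pts i)`. Every `f` in the unit ball of `Vᗮ` makes the same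
observations as `0`, so `G f = G 0` and the UCB property gives `⟪f, Φ x⟫ ≤ G 0 x`; optimising over
`f`, `G 0 x ≥ ‖P_{Vᗮ} Φ x‖ ≥ ‖P_{Vᗮ} Φ x‖²`.

The Mercer decomposition yields `Φ x = ∑ₗ ψₗ(x) vₗ` in `H` with `vₗ = ∫ ψₗ Φ dρ` orthogonal and
`‖vₗ‖² = λₗ`, and orthonormality of the `ψₗ` turns this into `∫ ‖A (Φ x)‖² dρ = ∑ₗ ‖A vₗ‖²` for
every bounded operator `A`. For `A = id` this is `∑ₗ λₗ`. For the projection onto the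
`m`-dimensional `V`, the weights `sₗ = ‖P_V vₗ‖² / λₗ` lie in `[0, 1]` and add up to at most `m`
(Bessel), so `∑ₗ λₗ sₗ ≤ λ₀ + ⋯ + λₘ₋₁` since `λ` is nonincreasing. Pythagoras then bounds the
excess of the estimator at `f = 0` below by `∑_{l ≥ m} λₗ ≥ ∑_{l ≥ n} λₗ`.
-/

open MeasureTheory Module Finset Filter Topology
open scoped RealInnerProductSpace

theorem tsum_mul_le_sum_range_of_antitone {lam s : ℕ → ℝ} (hlam : Antitone lam)
    (hlam0 : ∀ l, 0 ≤ lam l) (hs0 : ∀ l, 0 ≤ s l) (hs1 : ∀ l, s l ≤ 1) (hs : Summable s)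
    {m : ℕ} (hsm : ∑' l, s l ≤ m) :
    ∑' l, lam l * s l ≤ ∑ l ∈ range m, lam l := by
  -- termwise, `(lam l - lam m) * (s l - [l < m]) ≤ 0`
  set bound : ℕ → ℝ := fun l => (if l < m then lam l - lam m else 0) + lam m * s l
  have hfin : ∀ l ∉ range m, (if l < m then lam l - lam m else 0) = 0 := fun l hl =>
    if_neg (by simpa using hl)
  have hbound : ∀ l, lam l * s l ≤ bound l := fun l => by
    by_cases hl : l < m
    · have := hlam hl.le
      simp only [bound, if_pos hl]
      nlinarith [hs1 l]
    · have := hlam (not_lt.mp hl)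
      simp only [bound, if_neg hl, zero_add]
      nlinarith [hs0 l]
  have hsum_ite : Summable fun l => if l < m then lam l - lam m else 0 :=
    summable_of_ne_finset_zero hfin
  calc ∑' l, lam l * s l
      ≤ ∑' l, bound l :=
        Summable.tsum_le_tsum hbound
          (.of_nonneg_of_le (fun l => mul_nonneg (hlam0 l) (hs0 l))
            (fun l => mul_le_mul_of_nonneg_right (hlam (Nat.zero_le l)) (hs0 l)) (hs.mul_left _))
          (hsum_ite.add (hs.mul_left _))
    _ = ∑ l ∈ range m, lam l - m * lam m + lam m * ∑' l, s l := by
        rw [Summable.tsum_add hsum_ite (hs.mul_left _), tsum_eq_sum hfin, tsum_mul_left,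
          sum_congr rfl fun l hl => if_pos (mem_range.mp hl), sum_sub_distrib]
        simp
    _ ≤ ∑ l ∈ range m, lam l := by nlinarith [hlam0 m]

section InnerProductSpace

variable {E : Type*} [NormedAddCommGroup E] [InnerProductSpace ℝ E]

theorem norm_sq_sum_smul {ι : Type*} (s : Finset ι) (c : ι → ℝ) (w : ι → E) :
    ‖∑ i ∈ s, c i • w i‖ ^ 2 = ∑ i ∈ s, ∑ j ∈ s, c i * c j * ⟪w i, w j⟫ := by
  simp_rw [← real_inner_self_eq_norm_sq, sum_inner, inner_sum, real_inner_smul_left,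
    real_inner_smul_right, mul_assoc]

theorem norm_starProjection_le_of_forall_inner_le {K : Submodule ℝ E}
    [K.HasOrthogonalProjection] {y : E} {c : ℝ} (h : ∀ f ∈ K, ‖f‖ ≤ 1 → ⟪f, y⟫ ≤ c) :
    ‖K.starProjection y‖ ≤ c := by
  set p := K.starProjection y
  have hpy : ⟪p, y⟫ = ‖p‖ ^ 2 := by simpa using K.re_inner_starProjection_eq_normSq y
  rcases eq_or_ne p 0 with hp | hp
  · simpa [hp] using h 0 K.zero_mem (by simp)
  · have := h (‖p‖⁻¹ • p) (K.smul_mem _ (K.starProjection_apply_mem y)) (norm_smul_inv_norm hp).le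
    rwa [real_inner_smul_left, hpy, sq, inv_mul_cancel_left₀ (norm_ne_zero_iff.mpr hp)] at this

theorem sum_inner_sq_div_norm_sq_le {ι : Type*} {v : ι → E}
    (hv : Pairwise fun i j => ⟪v i, v j⟫ = 0) (x : E) (s : Finset ι) :
    ∑ i ∈ s, ⟪v i, x⟫ ^ 2 / ‖v i‖ ^ 2 ≤ ‖x‖ ^ 2 := by
  classical
  have hon : Orthonormal ℝ fun i : {i // v i ≠ 0} => ‖v i‖⁻¹ • v i := by
    refine ⟨fun i => norm_smul_inv_norm i.2, fun i j hij => ?_⟩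
    simp only [real_inner_smul_left, real_inner_smul_right, hv (Subtype.coe_ne_coe.mpr hij),
      mul_zero]
  calc ∑ i ∈ s, ⟪v i, x⟫ ^ 2 / ‖v i‖ ^ 2
      = ∑ i ∈ s with v i ≠ 0, ⟪v i, x⟫ ^ 2 / ‖v i‖ ^ 2 :=
        (sum_filter_of_ne fun i _ h hvi => by simp [hvi] at h).symm
    _ = ∑ i ∈ s.subtype (v · ≠ 0), ‖⟪‖v i‖⁻¹ • v i, x⟫‖ ^ 2 := by
        rw [← sum_subtype_eq_sum_filter]
        refine sum_congr rfl fun i _ => ?_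
        rw [real_inner_smul_left, Real.norm_eq_abs, sq_abs]
        ring
    _ ≤ ‖x‖ ^ 2 := hon.sum_inner_products_le x

theorem norm_sq_starProjection_eq_sum {K : Submodule ℝ E} [K.HasOrthogonalProjection]
    {ι : Type*} [Fintype ι] (b : OrthonormalBasis ι ℝ K) (y : E) :
    ‖K.starProjection y‖ ^ 2 = ∑ j, ⟪(b j : E), y⟫ ^ 2 := by
  rw [Submodule.starProjection_apply, Submodule.norm_coe, ← b.sum_sq_inner_right]
  simp_rw [Submodule.inner_orthogonalProjectionOnto_eq_of_mem_left]

theorem sum_norm_sq_starProjection_div_le_finrank {ι : Type*} {v : ι → E}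
    (hv : Pairwise fun i j => ⟪v i, v j⟫ = 0) (K : Submodule ℝ E) [FiniteDimensional ℝ K]
    (s : Finset ι) :
    ∑ i ∈ s, ‖K.starProjection (v i)‖ ^ 2 / ‖v i‖ ^ 2 ≤ finrank ℝ K := by
  set b := stdOrthonormalBasis ℝ K
  calc ∑ i ∈ s, ‖K.starProjection (v i)‖ ^ 2 / ‖v i‖ ^ 2
      = ∑ j, ∑ i ∈ s, ⟪v i, b j⟫ ^ 2 / ‖v i‖ ^ 2 := by
        simp_rw [norm_sq_starProjection_eq_sum b, sum_div, real_inner_comm (b _ : E)]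
        exact sum_comm
    _ ≤ ∑ _j : Fin (finrank ℝ K), (1 : ℝ) :=
        sum_le_sum fun j _ => (sum_inner_sq_div_norm_sq_le hv _ s).trans_eq
          (by rw [Submodule.norm_coe, b.orthonormal.1 j, one_pow])
    _ = finrank ℝ K := by simp

theorem tsum_norm_sq_starProjection_le_sum_range {v : ℕ → E}
    (hv : Pairwise fun i j => ⟪v i, v j⟫ = 0) (hanti : Antitone fun l => ‖v l‖ ^ 2)
    (K : Submodule ℝ E) [FiniteDimensional ℝ K] :
    ∑' l, ‖K.starProjection (v l)‖ ^ 2 ≤ ∑ l ∈ range (finrank ℝ K), ‖v l‖ ^ 2 := by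
  set s : ℕ → ℝ := fun l => ‖K.starProjection (v l)‖ ^ 2 / ‖v l‖ ^ 2
  have hs0 : ∀ l, 0 ≤ s l := fun l => by positivity
  have hs1 : ∀ l, s l ≤ 1 := fun l =>
    div_le_one_of_le₀ (pow_le_pow_left₀ (norm_nonneg _) (K.norm_starProjection_apply_le _) 2)
      (sq_nonneg _)
  -- for `v l = 0` both sides vanish, `s l` being the junk value `0 / 0 = 0`
  have hproj : ∀ l, ‖K.starProjection (v l)‖ ^ 2 = ‖v l‖ ^ 2 * s l := fun l => by
    by_cases hvl : v l = 0
    · simp [hvl]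
    · rw [mul_div_cancel₀ _ (by positivity)]
  simp_rw [hproj]
  exact tsum_mul_le_sum_range_of_antitone hanti (fun _ => sq_nonneg _) hs0 hs1
    (summable_of_sum_le hs0 (sum_norm_sq_starProjection_div_le_finrank hv K))
    (tsum_le_of_sum_le' (Nat.cast_nonneg _) (sum_norm_sq_starProjection_div_le_finrank hv K))

end InnerProductSpace

theorem Continuous.integrable_of_compactSpace {X E : Type*} [TopologicalSpace X] [CompactSpace X]
    [MeasurableSpace X] [OpensMeasurableSpace X] {ρ : Measure X} [IsFiniteMeasure ρ]
    [NormedAddCommGroup E] {f : X → E} (hf : Continuous f) : Integrable f ρ :=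
  hf.integrable_of_hasCompactSupport (HasCompactSupport.of_compactSpace f)

section Mercer

variable {X : Type*} [TopologicalSpace X] [CompactSpace X] [MeasurableSpace X]
  [OpensMeasurableSpace X] {ρ : Measure X} [IsFiniteMeasure ρ]
  {E : Type*} [NormedAddCommGroup E] [InnerProductSpace ℝ E]
  {H : Type*} [NormedAddCommGroup H] [InnerProductSpace ℝ H] [CompleteSpace H]
  {Φ : X → H} {lam : ℕ → ℝ} {ψ : ℕ → X → ℝ}

theorem integral_norm_sq_sum_smul (hψc : ∀ l, Continuous (ψ l))
    (horth : ∀ i j, ∫ x, ψ i x * ψ j x ∂ρ = if i = j then 1 else 0) (w : ℕ → E) (s : Finset ℕ) :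
    ∫ x, ‖∑ l ∈ s, ψ l x • w l‖ ^ 2 ∂ρ = ∑ l ∈ s, ‖w l‖ ^ 2 := by
  have hint : ∀ l k, Integrable (fun x => ψ l x * ψ k x * ⟪w l, w k⟫) ρ := fun l k =>
    ((hψc l).mul (hψc k)).mul continuous_const |>.integrable_of_compactSpace
  simp_rw [norm_sq_sum_smul]
  rw [integral_finsetSum _ fun l _ => integrable_finsetSum _ fun k _ => hint l k]
  refine sum_congr rfl fun l hl => ?_
  simp_rw [integral_finsetSum _ fun k _ => hint l k, integral_mul_const, horth, ite_mul,
    one_mul, zero_mul, sum_ite_eq, if_pos hl, real_inner_self_eq_norm_sq]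

variable (ρ Φ lam ψ) in
structure IsMercerExpansion : Prop where
  continuous_feature : Continuous Φ
  continuous_eigenfunction : ∀ l, Continuous (ψ l)
  integral_eigenfunction_mul : ∀ i j, ∫ x, ψ i x * ψ j x ∂ρ = if i = j then 1 else 0
  integral_kernel_mul_eigenfunction : ∀ i x, ∫ y, ⟪Φ x, Φ y⟫ * ψ i y ∂ρ = lam i * ψ i x
  hasSum_kernel : ∀ x y, HasSum (fun i => lam i * ψ i x * ψ i y) ⟪Φ x, Φ y⟫

variable (ρ Φ ψ) in
/-- The element of `H` representing the function `λₗ ψₗ`. -/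
noncomputable def mercerFeature (l : ℕ) : H := ∫ y, ψ l y • Φ y ∂ρ

namespace IsMercerExpansion

variable (hM : IsMercerExpansion ρ Φ lam ψ)
include hM

theorem inner_mercerFeature_left (l : ℕ) (x : X) :
    ⟪mercerFeature ρ Φ ψ l, Φ x⟫ = lam l * ψ l x := by
  rw [mercerFeature, real_inner_comm, ← integral_inner (f := fun y => ψ l y • Φ y)
    ((hM.continuous_eigenfunction l).smul hM.continuous_feature).integrable_of_compactSpace,
    ← hM.integral_kernel_mul_eigenfunction l x]
  simp_rw [real_inner_smul_right, mul_comm]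

theorem inner_mercerFeature (l k : ℕ) :
    ⟪mercerFeature ρ Φ ψ l, mercerFeature ρ Φ ψ k⟫ = if l = k then lam l else 0 := by
  calc ⟪mercerFeature ρ Φ ψ l, mercerFeature ρ Φ ψ k⟫
      = ∫ y, ⟪mercerFeature ρ Φ ψ l, ψ k y • Φ y⟫ ∂ρ :=
        (integral_inner (f := fun y => ψ k y • Φ y)
          ((hM.continuous_eigenfunction k).smul hM.continuous_feature).integrable_of_compactSpace
          _).symm
    _ = lam l * ∫ y, ψ l y * ψ k y ∂ρ := by
        simp_rw [real_inner_smul_right, hM.inner_mercerFeature_left, ← integral_const_mul]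
        congr 1 with y
        ring
    _ = if l = k then lam l else 0 := by
        rw [hM.integral_eigenfunction_mul]
        split_ifs <;> simp

theorem norm_sq_mercerFeature (l : ℕ) : ‖mercerFeature ρ Φ ψ l‖ ^ 2 = lam l := by
  rw [← real_inner_self_eq_norm_sq, hM.inner_mercerFeature, if_pos rfl]

theorem norm_sq_sum_smul_mercerFeature (s : Finset ℕ) (x : X) :
    ‖∑ l ∈ s, ψ l x • mercerFeature ρ Φ ψ l‖ ^ 2 = ∑ l ∈ s, lam l * ψ l x * ψ l x := by
  rw [norm_sq_sum_smul]
  refine sum_congr rfl fun l hl => ?_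
  simp_rw [hM.inner_mercerFeature, mul_ite, mul_zero, sum_ite_eq, if_pos hl]
  ring

theorem norm_sq_sub_sum_smul_mercerFeature (s : Finset ℕ) (x : X) :
    ‖Φ x - ∑ l ∈ s, ψ l x • mercerFeature ρ Φ ψ l‖ ^ 2
      = ‖Φ x‖ ^ 2 - ∑ l ∈ s, lam l * ψ l x * ψ l x := by
  rw [norm_sub_sq_real, hM.norm_sq_sum_smul_mercerFeature, inner_sum]
  simp_rw [real_inner_smul_right, ← real_inner_comm (Φ x), hM.inner_mercerFeature_left]
  have hcross : ∑ l ∈ s, ψ l x * (lam l * ψ l x) = ∑ l ∈ s, lam l * ψ l x * ψ l x :=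
    sum_congr rfl fun l _ => by ring
  rw [hcross]
  ring

theorem hasSum_smul_mercerFeature (x : X) :
    HasSum (fun l => ψ l x • mercerFeature ρ Φ ψ l) (Φ x) := by
  have hsq : Tendsto (fun s : Finset ℕ => ‖Φ x - ∑ l ∈ s, ψ l x • mercerFeature ρ Φ ψ l‖ ^ 2)
      atTop (𝓝 0) := by
    simp_rw [hM.norm_sq_sub_sum_smul_mercerFeature]
    have := (hM.hasSum_kernel x x).const_sub (‖Φ x‖ ^ 2)
    rwa [real_inner_self_eq_norm_sq, sub_self] at this
  rw [HasSum, tendsto_iff_norm_sub_tendsto_zero]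
  simpa [norm_sub_rev, Real.sqrt_sq (norm_nonneg _)] using hsq.sqrt

theorem hasSum_norm_sq_map_mercerFeature (A : H →L[ℝ] E) :
    HasSum (fun l => ‖A (mercerFeature ρ Φ ψ l)‖ ^ 2) (∫ x, ‖A (Φ x)‖ ^ 2 ∂ρ) := by
  set S : ℕ → X → H := fun N x => ∑ l ∈ range N, ψ l x • mercerFeature ρ Φ ψ l
  have hpartial : ∀ N, ∑ l ∈ range N, ‖A (mercerFeature ρ Φ ψ l)‖ ^ 2
      = ∫ x, ‖A (S N x)‖ ^ 2 ∂ρ := fun N => by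
    simp only [S, map_sum, map_smul, integral_norm_sq_sum_smul hM.continuous_eigenfunction
      hM.integral_eigenfunction_mul]
  have hS_le : ∀ N x, ‖S N x‖ ≤ ‖Φ x‖ := fun N x => by
    refine pow_le_pow_iff_left₀ (norm_nonneg _) (norm_nonneg _) two_ne_zero |>.mp ?_
    have := hM.norm_sq_sub_sum_smul_mercerFeature (range N) x
    rw [hM.norm_sq_sum_smul_mercerFeature]
    nlinarith [sq_nonneg ‖Φ x - S N x‖]
  rw [hasSum_iff_tendsto_nat_of_nonneg (fun _ => sq_nonneg _)]
  simp_rw [hpartial]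
  refine tendsto_integral_of_dominated_convergence (fun x => (‖A‖ * ‖Φ x‖) ^ 2)
    (fun N => ?_) ?_ (fun N => ae_of_all _ fun x => ?_) (ae_of_all _ fun x => ?_)
  · exact ((A.continuous.comp (continuous_finsetSum _ fun l _ =>
      (hM.continuous_eigenfunction l).smul continuous_const)).norm.pow 2).aestronglyMeasurable
  · exact (continuous_const.mul hM.continuous_feature.norm).pow 2 |>.integrable_of_compactSpace
  · rw [Real.norm_of_nonneg (sq_nonneg _)]
    gcongr
    exact A.le_opNorm_of_le (hS_le N x)
  · exact ((A.continuous.tendsto _).comp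
      (hM.hasSum_smul_mercerFeature x).tendsto_sum_nat).norm.pow 2

theorem hasSum_integral_norm_sq : HasSum lam (∫ x, ‖Φ x‖ ^ 2 ∂ρ) := by
  simpa [hM.norm_sq_mercerFeature] using
    hM.hasSum_norm_sq_map_mercerFeature (ContinuousLinearMap.id ℝ H)

theorem integral_norm_sq_starProjection_le (hlam : Antitone lam) (K : Submodule ℝ H)
    [FiniteDimensional ℝ K] :
    ∫ x, ‖K.starProjection (Φ x)‖ ^ 2 ∂ρ ≤ ∑ l ∈ range (finrank ℝ K), lam l := by
  have horthogonal : Pairwise fun l k => ⟪mercerFeature ρ Φ ψ l, mercerFeature ρ Φ ψ k⟫ = 0 :=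
    fun l k hlk => (hM.inner_mercerFeature l k).trans (if_neg hlk)
  rw [← (hM.hasSum_norm_sq_map_mercerFeature K.starProjection).tsum_eq]
  convert tsum_norm_sq_starProjection_le_sum_range horthogonal ?_ K using 2 with l
  · exact (hM.norm_sq_mercerFeature l).symm
  · simpa only [hM.norm_sq_mercerFeature] using hlam

theorem tsum_tail_le_integral_norm_sq_starProjection_orthogonal (hlam : Antitone lam)
    (K : Submodule ℝ H) [FiniteDimensional ℝ K] :
    ∑' i, lam (finrank ℝ K + i) ≤ ∫ x, ‖Kᗮ.starProjection (Φ x)‖ ^ 2 ∂ρ := by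
  have hsplit : ∫ x, ‖Kᗮ.starProjection (Φ x)‖ ^ 2 ∂ρ
      = ∫ x, ‖Φ x‖ ^ 2 ∂ρ - ∫ x, ‖K.starProjection (Φ x)‖ ^ 2 ∂ρ := by
    rw [← integral_sub (f := fun x => ‖Φ x‖ ^ 2) (g := fun x => ‖K.starProjection (Φ x)‖ ^ 2)
      (hM.continuous_feature.norm.pow 2).integrable_of_compactSpace
      ((K.starProjection.continuous.comp hM.continuous_feature).norm.pow
        2).integrable_of_compactSpace]
    congr 1 with x
    rw [K.norm_sq_eq_add_norm_sq_starProjection (Φ x)]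
    simp
  have htail := hM.hasSum_integral_norm_sq.summable.sum_add_tsum_nat_add (finrank ℝ K)
  rw [hsplit, ← hM.hasSum_integral_norm_sq.tsum_eq]
  simp_rw [add_comm (finrank ℝ K)]
  linarith [hM.integral_norm_sq_starProjection_le hlam K]

end IsMercerExpansion

end Mercer

theorem worst_case_ucb_excess_ge_tail_general
    {X : Type*} [MetricSpace X] [CompactSpace X] [MeasurableSpace X] [BorelSpace X]
    (ρ : Measure X) [IsProbabilityMeasure ρ]
    {H : Type*} [NormedAddCommGroup H] [InnerProductSpace ℝ H] [CompleteSpace H]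
    (Φ : X → H) (hΦc : Continuous Φ) (hΦ : ∀ x, ‖Φ x‖ ≤ 1)
    (lam : ℕ → ℝ) (hlam_anti : Antitone lam)
    (ψ : ℕ → X → ℝ) (hψc : ∀ i, Continuous (ψ i))
    (horth : ∀ i j, ∫ x, ψ i x * ψ j x ∂ρ = if i = j then 1 else 0)
    (heig : ∀ i x, ∫ y, ⟪Φ x, Φ y⟫ * ψ i y ∂ρ = lam i * ψ i x)
    (hmercer : ∀ x y, HasSum (fun i => lam i * ψ i x * ψ i y) ⟪Φ x, Φ y⟫)
    (n : ℕ) (pts : Fin n → X) (G : H → C(X, ℝ))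
    (hG : ∀ f f' : H, ‖f‖ ≤ 1 → ‖f'‖ ≤ 1 →
      (∀ i, ⟪f, Φ (pts i)⟫ = ⟪f', Φ (pts i)⟫) → G f = G f')
    (hUCB : ∀ f : H, ‖f‖ ≤ 1 → ∀ x : X, ⟪f, Φ x⟫ ≤ G f x) :
    ENNReal.ofReal (∑' i : ℕ, lam (n + i)) ≤
      ⨆ (f : H) (_ : ‖f‖ ≤ 1), ENNReal.ofReal (∫ x, (G f x - ⟪f, Φ x⟫) ∂ρ) := by
  have hM : IsMercerExpansion ρ Φ lam ψ := ⟨hΦc, hψc, horth, heig, hmercer⟩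
  set V := Submodule.span ℝ (Set.range fun i => Φ (pts i))
  have : FiniteDimensional ℝ V := .span_of_finite ℝ (Set.finite_range _)
  have hVn : finrank ℝ V ≤ n := (finrank_range_le_card _).trans_eq (Fintype.card_fin n)
  have hGV : ∀ f ∈ Vᗮ, ‖f‖ ≤ 1 → G f = G 0 := fun f hf hf1 =>
    hG f 0 hf1 (by simp) fun i => by
      rw [inner_zero_left]
      exact Submodule.inner_left_of_mem_orthogonal (Submodule.subset_span (Set.mem_range_self i)) hf
  have hG0 : ∀ x, ‖Vᗮ.starProjection (Φ x)‖ ^ 2 ≤ G 0 x := fun x => by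
    have hproj : ‖Vᗮ.starProjection (Φ x)‖ ≤ G 0 x :=
      norm_starProjection_le_of_forall_inner_le fun f hf hf1 => hGV f hf hf1 ▸ hUCB f hf1 x
    have hle1 := (Vᗮ.norm_starProjection_apply_le (Φ x)).trans (hΦ x)
    nlinarith [norm_nonneg (Vᗮ.starProjection (Φ x))]
  have htail_summable : ∀ k, Summable fun i => lam (k + i) := fun k =>
    hM.hasSum_integral_norm_sq.summable.comp_injective (add_right_injective k)
  refine le_iSup₂_of_le (0 : H) (by simp) (ENNReal.ofReal_le_ofReal ?_)
  simp only [inner_zero_left, sub_zero]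
  calc ∑' i, lam (n + i) ≤ ∑' i, lam (finrank ℝ V + i) :=
        Summable.tsum_le_tsum (fun i => hlam_anti (by omega)) (htail_summable n)
          (htail_summable _)
    _ ≤ ∫ x, ‖Vᗮ.starProjection (Φ x)‖ ^ 2 ∂ρ :=
        hM.tsum_tail_le_integral_norm_sq_starProjection_orthogonal hlam_anti V
    _ ≤ ∫ x, G 0 x ∂ρ :=
        integral_mono
          ((Vᗮ.starProjection.continuous.comp hΦc).norm.pow 2).integrable_of_compactSpace
          (G 0).continuous.integrable_of_compactSpace hG0

/-- Any upper-confidence-bound estimator `G` mapping the unit ball of `H` to `C(X)` that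
depends only on the `n` point evaluations `⟪f, Φ(x_i)⟫` has worst-case average excess
at least `Σ_{i=n+1}^∞ λ_i`. -/
theorem worst_case_ucb_excess_ge_tail
    {X : Type*} [MetricSpace X] [CompactSpace X] [MeasurableSpace X] [BorelSpace X]
    (ρ : Measure X) [IsProbabilityMeasure ρ]
    {H : Type*} [NormedAddCommGroup H] [InnerProductSpace ℝ H] [CompleteSpace H]
    (Φ : X → H) (hΦc : Continuous Φ) (hΦ : ∀ x, ‖Φ x‖ ≤ 1)
    (lam : ℕ → ℝ) (hlam_anti : Antitone lam) (hlam_nonneg : ∀ i, 0 ≤ lam i)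
    (ψ : ℕ → X → ℝ) (hψc : ∀ i, Continuous (ψ i))
    (horth : ∀ i j, ∫ x, ψ i x * ψ j x ∂ρ = if i = j then 1 else 0)
    (heig : ∀ i x, ∫ y, ⟪Φ x, Φ y⟫ * ψ i y ∂ρ = lam i * ψ i x)
    (hmercer : ∀ x y, HasSum (fun i => lam i * ψ i x * ψ i y) ⟪Φ x, Φ y⟫)
    (n : ℕ) (pts : Fin n → X) (G : H → C(X, ℝ))
    (hG : ∀ f f' : H, ‖f‖ ≤ 1 → ‖f'‖ ≤ 1 →
      (∀ i, ⟪f, Φ (pts i)⟫ = ⟪f', Φ (pts i)⟫) → G f = G f')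
    (hUCB : ∀ f : H, ‖f‖ ≤ 1 → ∀ x : X, ⟪f, Φ x⟫ ≤ G f x) :
    ENNReal.ofReal (∑' i : ℕ, lam (n + i)) ≤
      ⨆ (f : H) (_ : ‖f‖ ≤ 1), ENNReal.ofReal (∫ x, (G f x - ⟪f, Φ x⟫) ∂ρ) :=
  worst_case_ucb_excess_ge_tail_general ρ Φ hΦc hΦ lam hlam_anti ψ hψc horth heig hmercer n pts G hG
    hUCB
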